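/- If Φ ⊆ {I, O, U}, then for every interpretation I, the relation Z = {(x, [x]) : x ∈ Δ^I}, where [x] denotes the equivalence class of x under the largest L_Φ-auto-bisimulation ∼_{Φ,I}, is an L_Φ-bisimulation between I and the quotient interpretation I/∼_{Φ,I}. -/

import Mathlib

/-- A set of DL-features (subset of {I, O, Q, U, Self}). -/
structure DLFeat where
  hasI : Bool
  hasO : Bool
  hasQ : Bool
  hasU : Bool
  hasSelf : Bool

/-- An interpretation with concept names `CN`, role names `RN`, individual names `IN`
and domain `D`. -/
structure Interp (CN RN IN : Type) (D : Type) where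
  cInt : CN → Set D
  rInt : RN → D → D → Prop
  iInt : IN → D

/-- Interpretation of a basic role: a role name, possibly inverted. -/
def brInt {CN RN IN D : Type} (I : Interp CN RN IN D) (R : RN × Bool) (x y : D) : Prop :=
  if R.2 then I.rInt R.1 y x else I.rInt R.1 x y

mutual
/-- Concepts of the full language (membership in `L_Φ` is a separate predicate). -/
inductive DLConcept (CN RN IN : Type) : Type where
  | atom (A : CN)
  | top
  | bot
  | neg (C : DLConcept CN RN IN)
  | conj (C D : DLConcept CN RN IN)
  | disj (C D : DLConcept CN RN IN)
  | all (R : DLRole CN RN IN) (C : DLConcept CN RN IN)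
  | ex (R : DLRole CN RN IN) (C : DLConcept CN RN IN)
  | nom (a : IN)
  | atLeast (n : ℕ) (r : RN) (inverted : Bool) (C : DLConcept CN RN IN)
  | atMost (n : ℕ) (r : RN) (inverted : Bool) (C : DLConcept CN RN IN)
  | exSelf (r : RN)
/-- Roles of the full language. -/
inductive DLRole (CN RN IN : Type) : Type where
  | name (r : RN)
  | eps
  | comp (R S : DLRole CN RN IN)
  | runion (R S : DLRole CN RN IN)
  | star (R : DLRole CN RN IN)
  | test (C : DLConcept CN RN IN)
  | inv (r : RN)
  | univ
end

mutual
/-- The concept belongs to the language `L_Φ`. -/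
def DLConcept.inL {CN RN IN : Type} (Φ : DLFeat) : DLConcept CN RN IN → Prop
  | .atom _ => True
  | .top => True
  | .bot => True
  | .neg C => C.inL Φ
  | .conj C D => C.inL Φ ∧ D.inL Φ
  | .disj C D => C.inL Φ ∧ D.inL Φ
  | .all R C => R.inL Φ ∧ C.inL Φ
  | .ex R C => R.inL Φ ∧ C.inL Φ
  | .nom _ => Φ.hasO = true
  | .atLeast _ _ b C => Φ.hasQ = true ∧ (b = true → Φ.hasI = true) ∧ C.inL Φ
  | .atMost _ _ b C => Φ.hasQ = true ∧ (b = true → Φ.hasI = true) ∧ C.inL Φ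
  | .exSelf _ => Φ.hasSelf = true
/-- The role belongs to the language `L_Φ`. -/
def DLRole.inL {CN RN IN : Type} (Φ : DLFeat) : DLRole CN RN IN → Prop
  | .name _ => True
  | .eps => True
  | .comp R S => R.inL Φ ∧ S.inL Φ
  | .runion R S => R.inL Φ ∧ S.inL Φ
  | .star R => R.inL Φ
  | .test C => C.inL Φ
  | .inv _ => Φ.hasI = true
  | .univ => Φ.hasU = true
end

mutual
/-- Semantics of concepts. -/
def DLConcept.sem {CN RN IN D : Type} (I : Interp CN RN IN D) : DLConcept CN RN IN → Set D
  | .atom A => I.cInt A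
  | .top => Set.univ
  | .bot => ∅
  | .neg C => (DLConcept.sem I C)ᶜ
  | .conj C C' => DLConcept.sem I C ∩ DLConcept.sem I C'
  | .disj C C' => DLConcept.sem I C ∪ DLConcept.sem I C'
  | .all R C => {x | ∀ y, DLRole.sem I R x y → y ∈ DLConcept.sem I C}
  | .ex R C => {x | ∃ y, DLRole.sem I R x y ∧ y ∈ DLConcept.sem I C}
  | .nom a => {I.iInt a}
  | .atLeast n r b C =>
      {x | (n : Cardinal) ≤ Cardinal.mk {y // brInt I (r, b) x y ∧ y ∈ DLConcept.sem I C}}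
  | .atMost n r b C =>
      {x | Cardinal.mk {y // brInt I (r, b) x y ∧ y ∈ DLConcept.sem I C} ≤ (n : Cardinal)}
  | .exSelf r => {x | I.rInt r x x}
/-- Semantics of roles. -/
def DLRole.sem {CN RN IN D : Type} (I : Interp CN RN IN D) : DLRole CN RN IN → D → D → Prop
  | .name r => I.rInt r
  | .eps => Eq
  | .comp R S => Relation.Comp (DLRole.sem I R) (DLRole.sem I S)
  | .runion R S => fun x y => DLRole.sem I R x y ∨ DLRole.sem I S x y
  | .star R => Relation.ReflTransGen (DLRole.sem I R)
  | .test C => fun x y => x = y ∧ x ∈ DLConcept.sem I C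
  | .inv r => fun x y => I.rInt r y x
  | .univ => fun _ _ => True
end

/-- `Z` is an `L_Φ`-bisimulation between `I` and `I'`. -/
def Bisim {CN RN IN D D' : Type} (Φ : DLFeat) (I : Interp CN RN IN D)
    (I' : Interp CN RN IN D') (Z : D → D' → Prop) : Prop :=
  (∀ a : IN, Z (I.iInt a) (I'.iInt a)) ∧
  (∀ (A : CN) x x', Z x x' → (x ∈ I.cInt A ↔ x' ∈ I'.cInt A)) ∧
  (∀ (r : RN) x x' y, Z x x' → I.rInt r x y → ∃ y', Z y y' ∧ I'.rInt r x' y') ∧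
  (∀ (r : RN) x x' y', Z x x' → I'.rInt r x' y' → ∃ y, Z y y' ∧ I.rInt r x y) ∧
  (Φ.hasI = true →
    (∀ (r : RN) x x' y, Z x x' → I.rInt r y x → ∃ y', Z y y' ∧ I'.rInt r y' x') ∧
    (∀ (r : RN) x x' y', Z x x' → I'.rInt r y' x' → ∃ y, Z y y' ∧ I.rInt r y x)) ∧
  (Φ.hasO = true → ∀ (a : IN) x x', Z x x' → (x = I.iInt a ↔ x' = I'.iInt a)) ∧
  (Φ.hasQ = true → ∀ (r : RN) x x', Z x x' →
    ∃ h : {y // I.rInt r x y} ≃ {y' // I'.rInt r x' y'}, ∀ y, Z y.1 (h y).1) ∧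
  (Φ.hasQ = true → Φ.hasI = true → ∀ (r : RN) x x', Z x x' →
    ∃ h : {y // I.rInt r y x} ≃ {y' // I'.rInt r y' x'}, ∀ y, Z y.1 (h y).1) ∧
  (Φ.hasU = true → (∀ x, ∃ x', Z x x') ∧ (∀ x', ∃ x, Z x x')) ∧
  (Φ.hasSelf = true → ∀ (r : RN) x x', Z x x' → (I.rInt r x x ↔ I'.rInt r x' x'))

/-- One step along a basic role (role name, or inverse of a role name if `I ∈ Φ`). -/
def basicStep {CN RN IN D : Type} (Φ : DLFeat) (I : Interp CN RN IN D) (x y : D) : Prop :=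
  ∃ r : RN, I.rInt r x y ∨ (Φ.hasI = true ∧ I.rInt r y x)

/-- `I` is unreachable-objects-free: every element is reachable from some named
individual via a finite path of basic-role edges. -/
def UOF {CN RN IN D : Type} (Φ : DLFeat) (I : Interp CN RN IN D) : Prop :=
  ∀ x : D, ∃ a : IN, Relation.ReflTransGen (basicStep Φ I) (I.iInt a) x

/-- `I` validates the GCI `C ⊑ C'`. -/
def satGCI {CN RN IN D : Type} (I : Interp CN RN IN D) (C C' : DLConcept CN RN IN) : Prop :=
  DLConcept.sem I C ⊆ DLConcept.sem I C'

/-- `I` is a model of the TBox `T`. -/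
def modelsTBox {CN RN IN D : Type} (I : Interp CN RN IN D)
    (T : Set (DLConcept CN RN IN × DLConcept CN RN IN)) : Prop :=
  ∀ p ∈ T, satGCI I p.1 p.2

/-- Individual assertions. -/
inductive Assertion (CN RN IN : Type) : Type where
  | conc (C : DLConcept CN RN IN) (a : IN)
  | rolePos (R : DLRole CN RN IN) (a b : IN)
  | roleNeg (R : DLRole CN RN IN) (a b : IN)
  | eq (a b : IN)
  | neq (a b : IN)

/-- The assertion belongs to `L_Φ`. -/
def Assertion.inL {CN RN IN : Type} (Φ : DLFeat) : Assertion CN RN IN → Prop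
  | .conc C _ => C.inL Φ
  | .rolePos R _ _ => R.inL Φ
  | .roleNeg R _ _ => R.inL Φ
  | .eq _ _ => True
  | .neq _ _ => True

/-- `I` satisfies the individual assertion. -/
def Assertion.sat {CN RN IN D : Type} (I : Interp CN RN IN D) : Assertion CN RN IN → Prop
  | .conc C a => I.iInt a ∈ DLConcept.sem I C
  | .rolePos R a b => DLRole.sem I R (I.iInt a) (I.iInt b)
  | .roleNeg R a b => ¬ DLRole.sem I R (I.iInt a) (I.iInt b)
  | .eq a b => I.iInt a = I.iInt b
  | .neq a b => I.iInt a ≠ I.iInt b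

/-- `I` is a model of the ABox `A`. -/
def modelsABox {CN RN IN D : Type} (I : Interp CN RN IN D) (A : Set (Assertion CN RN IN)) : Prop :=
  ∀ φ ∈ A, φ.sat I

/-- A role axiom `R₁ ∘ … ∘ R_k ⊑ r` (`ε ⊑ r` when the list is empty), the `R_i` basic roles. -/
structure RoleAx (RN : Type) where
  lhs : List (RN × Bool)
  rhs : RN

/-- The role axiom is in `L_Φ` (inverse basic roles only if `I ∈ Φ`). -/
def RoleAx.inL {RN : Type} (Φ : DLFeat) (ax : RoleAx RN) : Prop :=
  ∀ p ∈ ax.lhs, p.2 = true → Φ.hasI = true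

/-- Interpretation of a composition chain of basic roles (`ε` for the empty chain). -/
def chainInt {CN RN IN D : Type} (I : Interp CN RN IN D) : List (RN × Bool) → D → D → Prop
  | [] => Eq
  | R :: l => fun x z => ∃ y, brInt I R x y ∧ chainInt I l y z

/-- `I` validates the role axiom. -/
def satRoleAx {CN RN IN D : Type} (I : Interp CN RN IN D) (ax : RoleAx RN) : Prop :=
  ∀ x y, chainInt I ax.lhs x y → I.rInt ax.rhs x y

/-- `I` is a model of the RBox `R`. -/
def modelsRBox {CN RN IN D : Type} (I : Interp CN RN IN D) (R : Set (RoleAx RN)) : Prop :=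
  ∀ ax ∈ R, satRoleAx I ax

/-- `I'` is an r-extension of `I`. -/
def RExt {CN RN IN D : Type} (I I' : Interp CN RN IN D) : Prop :=
  I'.cInt = I.cInt ∧ I'.iInt = I.iInt ∧ ∀ (r : RN) x y, I.rInt r x y → I'.rInt r x y

/-- `I'` is the least r-extension of `I` validating the RBox `R`. -/
def LeastRExt {CN RN IN D : Type} (I : Interp CN RN IN D) (R : Set (RoleAx RN))
    (I' : Interp CN RN IN D) : Prop :=
  RExt I I' ∧ modelsRBox I' R ∧
    ∀ I'' : Interp CN RN IN D, RExt I I'' → modelsRBox I'' R →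
      ∀ (r : RN) x y, I'.rInt r x y → I''.rInt r x y

/-- `I` is finitely branching w.r.t. `L_Φ`. -/
def FinBranch {CN RN IN D : Type} (Φ : DLFeat) (I : Interp CN RN IN D) : Prop :=
  ∀ (r : RN) (x : D), {y | I.rInt r x y}.Finite ∧ (Φ.hasI = true → {y | I.rInt r y x}.Finite)

/-- `x` and `x'` are `L_Φ`-equivalent: they satisfy the same concepts of `L_Φ`. -/
def LEquiv {CN RN IN D D' : Type} (Φ : DLFeat) (I : Interp CN RN IN D)
    (I' : Interp CN RN IN D') (x : D) (x' : D') : Prop :=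
  ∀ C : DLConcept CN RN IN, C.inL Φ → (x ∈ DLConcept.sem I C ↔ x' ∈ DLConcept.sem I' C)

/-- The largest `L_Φ`-auto-bisimulation of `I` (union of all auto-bisimulations). -/
def gbisim {CN RN IN D : Type} (Φ : DLFeat) (I : Interp CN RN IN D) (x y : D) : Prop :=
  ∃ Z, Bisim Φ I I Z ∧ Z x y

/-- The quotient interpretation of `I` w.r.t. the largest `L_Φ`-auto-bisimulation. -/
def quotInterp {CN RN IN D : Type} (Φ : DLFeat) (I : Interp CN RN IN D) :
    Interp CN RN IN (Quot (gbisim Φ I)) where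
  cInt A := {q | ∃ x, Quot.mk _ x = q ∧ x ∈ I.cInt A}
  rInt r q q' := ∃ x y, Quot.mk _ x = q ∧ Quot.mk _ y = q' ∧ I.rInt r x y
  iInt a := Quot.mk _ (I.iInt a)

/-- A QS-interpretation: an interpretation together with multiplicity functions for
basic roles and self-loop sets for role names. -/
structure QSInterp (CN RN IN D : Type) where
  toInterp : Interp CN RN IN D
  QU : (RN × Bool) → D → D → ℕ
  SE : RN → Set D

/-- The defining positivity condition of QS-interpretations:
`QU R x y > 0` iff `R` connects `x` to `y`. -/
def QSInterp.Proper {CN RN IN D : Type} (J : QSInterp CN RN IN D) : Prop :=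
  ∀ (R : RN × Bool) x y, 0 < J.QU R x y ↔ brInt J.toInterp R x y

/-- `Σ {f y : y ∈ S}` as an extended natural number. -/
noncomputable def qsum {D : Type} (f : D → ℕ) (S : Set D) : ℕ∞ :=
  ⨆ (s : Finset D) (_ : ↑s ⊆ S), (∑ y ∈ s, f y : ℕ∞)

mutual
/-- Semantics of concepts in a QS-interpretation. -/
noncomputable def DLConcept.qsem {CN RN IN D : Type} (J : QSInterp CN RN IN D) :
    DLConcept CN RN IN → Set D
  | .atom A => J.toInterp.cInt A
  | .top => Set.univ
  | .bot => ∅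
  | .neg C => (DLConcept.qsem J C)ᶜ
  | .conj C C' => DLConcept.qsem J C ∩ DLConcept.qsem J C'
  | .disj C C' => DLConcept.qsem J C ∪ DLConcept.qsem J C'
  | .all R C => {x | ∀ y, DLRole.qsem J R x y → y ∈ DLConcept.qsem J C}
  | .ex R C => {x | ∃ y, DLRole.qsem J R x y ∧ y ∈ DLConcept.qsem J C}
  | .nom a => {J.toInterp.iInt a}
  | .atLeast n r b C => {x | (n : ℕ∞) ≤ qsum (J.QU (r, b) x) (DLConcept.qsem J C)}
  | .atMost n r b C => {x | qsum (J.QU (r, b) x) (DLConcept.qsem J C) ≤ (n : ℕ∞)}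
  | .exSelf r => J.SE r
/-- Semantics of roles in a QS-interpretation. -/
noncomputable def DLRole.qsem {CN RN IN D : Type} (J : QSInterp CN RN IN D) :
    DLRole CN RN IN → D → D → Prop
  | .name r => J.toInterp.rInt r
  | .eps => Eq
  | .comp R S => Relation.Comp (DLRole.qsem J R) (DLRole.qsem J S)
  | .runion R S => fun x y => DLRole.qsem J R x y ∨ DLRole.qsem J S x y
  | .star R => Relation.ReflTransGen (DLRole.qsem J R)
  | .test C => fun x y => x = y ∧ x ∈ DLConcept.qsem J C
  | .inv r => fun x y => J.toInterp.rInt r y x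
  | .univ => fun _ _ => True
end

/-- The quotient QS-interpretation of a traditional interpretation `I` w.r.t. the
largest `L_Φ`-auto-bisimulation. -/
noncomputable def qsQuot {CN RN IN D : Type} (Φ : DLFeat) (I : Interp CN RN IN D) :
    QSInterp CN RN IN (Quot (gbisim Φ I)) where
  toInterp := quotInterp Φ I
  QU R q q' := sSup {n | ∃ x, Quot.mk _ x = q ∧
    n = Set.ncard {y | Quot.mk (gbisim Φ I) y = q' ∧ brInt I R x y}}
  SE r := {q | ∃ x, Quot.mk _ x = q ∧ I.rInt r x x}

/-!
Bisimulations contain the identity and are closed under converse and composition, so the largest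
auto-bisimulation `∼` is an equivalence relation, and `[x] = [y]` holds exactly when some
auto-bisimulation relates `x` and `y`. Every condition on the projection `x ↦ [x]` that involves
a representative other than `x` itself is then inherited from such an auto-bisimulation.
-/

section Bisim

variable {CN RN IN D D' D'' : Type} {Φ : DLFeat} {I : Interp CN RN IN D}
  {I' : Interp CN RN IN D'} {I'' : Interp CN RN IN D''}

theorem Bisim.eq (Φ : DLFeat) (I : Interp CN RN IN D) : Bisim Φ I I Eq := by
  refine ⟨fun _ => rfl, ?_, ?_, ?_, fun _ => ⟨?_, ?_⟩, ?_, ?_, ?_, fun _ => ⟨?_, ?_⟩, ?_⟩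
  · rintro A x _ rfl; rfl
  · rintro r x _ y rfl h; exact ⟨y, rfl, h⟩
  · rintro r x _ y rfl h; exact ⟨y, rfl, h⟩
  · rintro r x _ y rfl h; exact ⟨y, rfl, h⟩
  · rintro r x _ y rfl h; exact ⟨y, rfl, h⟩
  · rintro _ a x _ rfl; rfl
  · rintro _ r x _ rfl; exact ⟨Equiv.refl _, fun _ => rfl⟩
  · rintro _ _ r x _ rfl; exact ⟨Equiv.refl _, fun _ => rfl⟩
  · exact fun x => ⟨x, rfl⟩
  · exact fun x => ⟨x, rfl⟩
  · rintro _ r x _ rfl; rfl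

theorem Bisim.symm {Z : D → D' → Prop} (h : Bisim Φ I I' Z) :
    Bisim Φ I' I (flip Z) := by
  obtain ⟨hN, hA, hF, hB, hInv, hO, hQ, hQInv, hU, hS⟩ := h
  refine ⟨hN, fun A x x' hZ => (hA A x' x hZ).symm, fun r x x' y hZ hr => hB r x' x y hZ hr,
    fun r x x' y hZ hr => hF r x' x y hZ hr,
    fun hI => ⟨fun r x x' y hZ hr => (hInv hI).2 r x' x y hZ hr,
      fun r x x' y hZ hr => (hInv hI).1 r x' x y hZ hr⟩,
    fun hO' a x x' hZ => (hO hO' a x' x hZ).symm, ?_, ?_,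
    fun hU' => ⟨(hU hU').2, (hU hU').1⟩, fun hS' r x x' hZ => (hS hS' r x' x hZ).symm⟩
  · intro hQ' r x x' hZ
    obtain ⟨e, he⟩ := hQ hQ' r x' x hZ
    exact ⟨e.symm, fun y => by simpa [flip] using he (e.symm y)⟩
  · intro hQ' hI r x x' hZ
    obtain ⟨e, he⟩ := hQInv hQ' hI r x' x hZ
    exact ⟨e.symm, fun y => by simpa [flip] using he (e.symm y)⟩

theorem Bisim.comp {Z : D → D' → Prop} {Z' : D' → D'' → Prop}
    (h : Bisim Φ I I' Z) (h' : Bisim Φ I' I'' Z') :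
    Bisim Φ I I'' (Relation.Comp Z Z') := by
  obtain ⟨hN, hA, hF, hB, hInv, hO, hQ, hQInv, hU, hS⟩ := h
  obtain ⟨hN', hA', hF', hB', hInv', hO', hQ', hQInv', hU', hS'⟩ := h'
  refine ⟨fun a => ⟨_, hN a, hN' a⟩, ?_, ?_, ?_, fun hI => ⟨?_, ?_⟩, ?_, ?_, ?_,
    fun hU'' => ⟨?_, ?_⟩, ?_⟩
  · rintro A x x'' ⟨x', hZ, hZ'⟩
    exact (hA A x x' hZ).trans (hA' A x' x'' hZ')
  · rintro r x x'' y ⟨x', hZ, hZ'⟩ hr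
    obtain ⟨y', hy', hr'⟩ := hF r x x' y hZ hr
    obtain ⟨y'', hy'', hr''⟩ := hF' r x' x'' y' hZ' hr'
    exact ⟨y'', ⟨y', hy', hy''⟩, hr''⟩
  · rintro r x x'' y'' ⟨x', hZ, hZ'⟩ hr
    obtain ⟨y', hy', hr'⟩ := hB' r x' x'' y'' hZ' hr
    obtain ⟨y, hy, hr0⟩ := hB r x x' y' hZ hr'
    exact ⟨y, ⟨y', hy, hy'⟩, hr0⟩
  · rintro r x x'' y ⟨x', hZ, hZ'⟩ hr
    obtain ⟨y', hy', hr'⟩ := (hInv hI).1 r x x' y hZ hr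
    obtain ⟨y'', hy'', hr''⟩ := (hInv' hI).1 r x' x'' y' hZ' hr'
    exact ⟨y'', ⟨y', hy', hy''⟩, hr''⟩
  · rintro r x x'' y'' ⟨x', hZ, hZ'⟩ hr
    obtain ⟨y', hy', hr'⟩ := (hInv' hI).2 r x' x'' y'' hZ' hr
    obtain ⟨y, hy, hr0⟩ := (hInv hI).2 r x x' y' hZ hr'
    exact ⟨y, ⟨y', hy, hy'⟩, hr0⟩
  · rintro hO'' a x x'' ⟨x', hZ, hZ'⟩
    exact (hO hO'' a x x' hZ).trans (hO' hO'' a x' x'' hZ')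
  · rintro hQ'' r x x'' ⟨x', hZ, hZ'⟩
    obtain ⟨e, he⟩ := hQ hQ'' r x x' hZ
    obtain ⟨e', he'⟩ := hQ' hQ'' r x' x'' hZ'
    exact ⟨e.trans e', fun y => ⟨_, he y, he' (e y)⟩⟩
  · rintro hQ'' hI r x x'' ⟨x', hZ, hZ'⟩
    obtain ⟨e, he⟩ := hQInv hQ'' hI r x x' hZ
    obtain ⟨e', he'⟩ := hQInv' hQ'' hI r x' x'' hZ'
    exact ⟨e.trans e', fun y => ⟨_, he y, he' (e y)⟩⟩
  · intro x
    obtain ⟨x', hx'⟩ := (hU hU'').1 x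
    obtain ⟨x'', hx''⟩ := (hU' hU'').1 x'
    exact ⟨x'', x', hx', hx''⟩
  · intro x''
    obtain ⟨x', hx'⟩ := (hU' hU'').2 x''
    obtain ⟨x, hx⟩ := (hU hU'').2 x'
    exact ⟨x, x', hx, hx'⟩
  · rintro hS'' r x x'' ⟨x', hZ, hZ'⟩
    exact (hS hS'' r x x' hZ).trans (hS' hS'' r x' x'' hZ')

end Bisim

section Quotient

variable {CN RN IN D : Type} {Φ : DLFeat} {I : Interp CN RN IN D}

theorem gbisim_equivalence (Φ : DLFeat) (I : Interp CN RN IN D) :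
    Equivalence (gbisim Φ I) where
  refl _ := ⟨Eq, Bisim.eq Φ I, rfl⟩
  symm := fun ⟨Z, hZ, hxy⟩ => ⟨flip Z, hZ.symm, hxy⟩
  trans := fun ⟨_, hZ, hxy⟩ ⟨_, hZ', hyz⟩ => ⟨_, hZ.comp hZ', _, hxy, hyz⟩

theorem gbisim_of_mk_eq_mk {x y : D} (h : Quot.mk (gbisim Φ I) x = Quot.mk _ y) :
    gbisim Φ I x y :=
  (gbisim_equivalence Φ I).eqvGen_iff.mp (Quot.eqvGen_exact h)

theorem quotInterp_mk_mem_cInt_iff {A : CN} {x : D} :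
    Quot.mk _ x ∈ (quotInterp Φ I).cInt A ↔ x ∈ I.cInt A := by
  refine ⟨fun ⟨y, hyx, hy⟩ => ?_, fun hx => ⟨x, rfl, hx⟩⟩
  obtain ⟨Z, ⟨-, hA, -⟩, hZ⟩ := gbisim_of_mk_eq_mk hyx
  exact (hA A y x hZ).mp hy

theorem quotInterp_rInt_mk_left_iff {r : RN} {x : D} {q : Quot (gbisim Φ I)} :
    (quotInterp Φ I).rInt r (Quot.mk _ x) q ↔ ∃ y, Quot.mk _ y = q ∧ I.rInt r x y := by
  refine ⟨fun ⟨x', y', hx', hy', hr⟩ => ?_, fun ⟨y, hy, hr⟩ => ⟨x, y, rfl, hy, hr⟩⟩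
  obtain ⟨Z, hZ, hxx'⟩ := gbisim_of_mk_eq_mk hx'.symm
  obtain ⟨y, hyy', hr⟩ := hZ.2.2.2.1 r x x' y' hxx' hr
  exact ⟨y, hy' ▸ Quot.sound ⟨Z, hZ, hyy'⟩, hr⟩

theorem quotInterp_rInt_mk_right_iff (hI : Φ.hasI = true) {r : RN} {x : D}
    {q : Quot (gbisim Φ I)} :
    (quotInterp Φ I).rInt r q (Quot.mk _ x) ↔ ∃ y, Quot.mk _ y = q ∧ I.rInt r y x := by
  refine ⟨fun ⟨y', x', hy', hx', hr⟩ => ?_, fun ⟨y, hy, hr⟩ => ⟨y, x, hy, rfl, hr⟩⟩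
  obtain ⟨Z, hZ, hxx'⟩ := gbisim_of_mk_eq_mk hx'.symm
  obtain ⟨y, hyy', hr⟩ := (hZ.2.2.2.2.1 hI).2 r x x' y' hxx' hr
  exact ⟨y, hy' ▸ Quot.sound ⟨Z, hZ, hyy'⟩, hr⟩

theorem mk_eq_quotInterp_iInt_iff (hO : Φ.hasO = true) {a : IN} {x : D} :
    Quot.mk _ x = (quotInterp Φ I).iInt a ↔ x = I.iInt a := by
  refine ⟨fun h => ?_, fun h => h ▸ rfl⟩
  obtain ⟨Z, hZ, hxa⟩ := gbisim_of_mk_eq_mk h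
  exact (hZ.2.2.2.2.2.1 hO a x _ hxa).mpr rfl

end Quotient

/-- For `Φ ⊆ {I,O,U}`, the canonical projection of an interpretation onto
its quotient by the largest `L_Φ`-auto-bisimulation is an `L_Φ`-bisimulation. -/
theorem quotient_projection_bisim {CN RN IN D : Type} (Φ : DLFeat)
    (hQ : Φ.hasQ = false) (hS : Φ.hasSelf = false) (I : Interp CN RN IN D) :
    Bisim Φ I (quotInterp Φ I) (fun x q => Quot.mk (gbisim Φ I) x = q) := by
  refine ⟨fun _ => rfl, ?_, ?_, ?_, fun hI => ⟨?_, ?_⟩, ?_, by simp [hQ], by simp [hQ],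
    fun _ => ⟨fun x => ⟨_, rfl⟩, Quot.exists_rep⟩, by simp [hS]⟩
  · rintro A x _ rfl
    exact quotInterp_mk_mem_cInt_iff.symm
  · rintro r x _ y rfl hr
    exact ⟨_, rfl, x, y, rfl, rfl, hr⟩
  · rintro r x _ q rfl hr
    exact quotInterp_rInt_mk_left_iff.mp hr
  · rintro r x _ y rfl hr
    exact ⟨_, rfl, y, x, rfl, rfl, hr⟩
  · rintro r x _ q rfl hr
    exact (quotInterp_rInt_mk_right_iff hI).mp hr
  · rintro hO a x _ rfl
    exact (mk_eq_quotInterp_iInt_iff hO).symm
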